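/- arXiv:0907.4592 — 2 statements merged into one kernel-verified Lean document; each statement's English description precedes it below -/
import Mathlib

section
/- Assume (H0) and (H3), and let t > 0. Let a = (α, β) ∈ ℝ^d and ā = (α, β̄) have the same first d−1 coordinates, with φ(a) = φ(ā) = t and φ₀(ā) < t. Then the function h(z) = e^{a·z} − ((t − φ₀(a))/(t − φ₀(ā))) e^{ā·z} on E = ℤ^{d-1} × ℕ satisfies Σ_{z'∈E} p(z,z') h(z') = t h(z) for every z ∈ E, i.e. h is t-harmonic for P. -/
open scoped Classical BigOperators
open Filter

noncomputable section

namespace RWHalfspace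

/-- `ℤ^d` modeled as `ℤ^{d-1} × ℤ`; the Lean parameter `d` is the paper's `d-1`,
so that the paper's hypothesis `d ≥ 1` is automatic. -/
abbrev Zd (d : ℕ) := (Fin d → ℤ) × ℤ
/-- The state space `E = ℤ^{d-1} × ℕ`. -/
abbrev Ed (d : ℕ) := (Fin d → ℤ) × ℕ
/-- `ℝ^d` modeled as `ℝ^{d-1} × ℝ`. -/
abbrev Rd (d : ℕ) := (Fin d → ℝ) × ℝ

variable {d : ℕ}

/-- The scalar product `a · z` for `a ∈ ℝ^d`, `z ∈ ℤ^d`. -/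
def dotZ (a : Rd d) (z : Zd d) : ℝ := (∑ i, a.1 i * (z.1 i : ℝ)) + a.2 * (z.2 : ℝ)

/-- The scalar product on `ℝ^d`. -/
def dotR (a b : Rd d) : ℝ := (∑ i, a.1 i * b.1 i) + a.2 * b.2

/-- The scalar product `a · z` for `a ∈ ℝ^d`, `z ∈ E = ℤ^{d-1} × ℕ`. -/
def dotE (a : Rd d) (z : Ed d) : ℝ := (∑ i, a.1 i * (z.1 i : ℝ)) + a.2 * (z.2 : ℝ)

/-- The jump generating function `φ(a) = ∑_{z ∈ ℤ^d} μ(z) e^{a·z}`. -/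
def phi (μ : Zd d → ℝ) (a : Rd d) : ℝ := ∑' z, μ z * Real.exp (dotZ a z)

/-- The difference `z' - z ∈ ℤ^d` of two points of `E`. -/
def jump (z z' : Ed d) : Zd d := (z'.1 - z.1, (z'.2 : ℤ) - (z.2 : ℤ))

/-- The transition kernel of the reflected random walk on `E = ℤ^{d-1} × ℕ`. -/
def ker (μ μ₀ : Zd d → ℝ) (z z' : Ed d) : ℝ :=
  if z.2 = 0 then μ₀ (jump z z') else μ (jump z z')

/-- The `n`-step transition kernel `p^(n)`. -/
def kerN (μ μ₀ : Zd d → ℝ) : ℕ → Ed d → Ed d → ℝ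
  | 0 => fun z z' => if z = z' then 1 else 0
  | n + 1 => fun z z' => ∑' w, kerN μ μ₀ n z w * ker μ μ₀ w z'

/-- The `n`-step kernel of the homogeneous random walk on `ℤ^d` with step distribution `μ`. -/
def homN (μ : Zd d → ℝ) : ℕ → Zd d → Zd d → ℝ
  | 0 => fun z z' => if z = z' then 1 else 0
  | n + 1 => fun z z' => ∑' w, homN μ n z w * μ (z' - w)

/-- The step distribution of the last coordinate of the homogeneous random walk. -/
def lastStep (μ : Zd d → ℝ) (k : ℤ) : ℝ := ∑' x : Fin d → ℤ, μ (x, k)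

/-- The `n`-step kernel of the last coordinate random walk on `ℤ`. -/
def lastN (μ : Zd d → ℝ) : ℕ → ℤ → ℤ → ℝ
  | 0 => fun k k' => if k = k' then 1 else 0
  | n + 1 => fun k k' => ∑' j, lastN μ n k j * lastStep μ (k' - j)

/-- The convergence norm `ρ(P) = limsup_n (p^(n)(z,z'))^{1/n}` (independent of `z, z'`
by irreducibility; we take `z = z' = 0`). -/
def rho (μ μ₀ : Zd d → ℝ) : ℝ :=
  limsup (fun n : ℕ => (kerN μ μ₀ n 0 0) ^ ((n : ℝ)⁻¹)) atTop

/-- `μ` is a nonnegative measure on `ℤ^d` with `0 < μ(ℤ^d) ≤ 1`. -/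
def IsMeasure (μ : Zd d → ℝ) : Prop := (∀ z, 0 ≤ μ z) ∧ 0 < ∑' z, μ z ∧ ∑' z, μ z ≤ 1

/-- (H0): `μ(x,y) = 0` for `y < -1` and `μ₀(x,y) = 0` for `y < 0`. -/
def H0 (μ μ₀ : Zd d → ℝ) : Prop :=
  (∀ z : Zd d, z.2 < -1 → μ z = 0) ∧ (∀ z : Zd d, z.2 < 0 → μ₀ z = 0)

/-- (H1): the kernel `P` is irreducible on `E`. -/
def H1 (μ μ₀ : Zd d → ℝ) : Prop := ∀ z z' : Ed d, ∃ n, 0 < kerN μ μ₀ n z z'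

/-- (H2): the homogeneous random walk with step distribution `μ` is irreducible on `ℤ^d`. -/
def H2 (μ : Zd d → ℝ) : Prop := ∀ z z' : Zd d, ∃ n, 0 < homN μ n z z'

/-- (H3) for a single measure: the jump generating function is finite everywhere
(the defining series converges for every `a ∈ ℝ^d`). -/
def H3 (μ : Zd d → ℝ) : Prop := ∀ a : Rd d, Summable fun z => μ z * Real.exp (dotZ a z)

/-- (H4): the last coordinate of the `μ`-random walk is aperiodic
(the gcd of `{n : p^n(0,0) > 0}` equals `1`). -/
def H4 (μ : Zd d → ℝ) : Prop := ∀ m : ℕ, (∀ n : ℕ, 0 < lastN μ n 0 0 → m ∣ n) → m = 1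

/-- The sublevel set `D^t = {a : φ(a) ≤ t}`. -/
def Dset (μ : Zd d → ℝ) (t : ℝ) : Set (Rd d) := {a | phi μ a ≤ t}

/-- `Θ^t = {α ∈ ℝ^{d-1} : inf_β max(φ(α,β), φ₀(α,β)) ≤ t}`. -/
def Theta (μ μ₀ : Zd d → ℝ) (t : ℝ) : Set (Fin d → ℝ) :=
  {α | sInf (Set.range fun β : ℝ => max (phi μ (α, β)) (phi μ₀ (α, β))) ≤ t}

/-- `Ĥ^t = (Θ^t × ℝ) ∩ D^t`. -/
def Hhat (μ μ₀ : Zd d → ℝ) (t : ℝ) : Set (Rd d) :=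
  {a | a.1 ∈ Theta μ μ₀ t ∧ phi μ a ≤ t}

/-- Partial derivative of `f : ℝ^d → ℝ` in the last coordinate. -/
def dBeta (f : Rd d → ℝ) (a : Rd d) : ℝ := fderiv ℝ f a (0, 1)

/-- The (coordinate) gradient of `f : ℝ^d → ℝ`. -/
def gradV (f : Rd d → ℝ) (a : Rd d) : Rd d :=
  (fun i => fderiv ℝ f a (Pi.single i 1, 0), fderiv ℝ f a (0, 1))

/-- `∂₊D^t`: boundary points of `D^t` where the last coordinate of `∇φ` is `≥ 0`. -/
def dPlus (μ : Zd d → ℝ) (t : ℝ) : Set (Rd d) :=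
  {a | a ∈ frontier (Dset μ t) ∧ 0 ≤ dBeta (phi μ) a}

/-- `∂₀D^t`: boundary points of `D^t` where the last coordinate of `∇φ` is `0`. -/
def dZero (μ : Zd d → ℝ) (t : ℝ) : Set (Rd d) :=
  {a | a ∈ frontier (Dset μ t) ∧ dBeta (phi μ) a = 0}

/-- `Γ₊^t = Ĥ^t ∩ ∂₊D^t`. -/
def GammaPlus (μ μ₀ : Zd d → ℝ) (t : ℝ) : Set (Rd d) := Hhat μ μ₀ t ∩ dPlus μ t

/-- The normal cone `V_t(a)` to `Ĥ^t` at `a`. -/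
def Vcone (μ μ₀ : Zd d → ℝ) (t : ℝ) (a : Rd d) : Set (Rd d) :=
  {q | ∀ a' ∈ Hhat μ μ₀ t, dotR q (a' - a) ≤ 0}

/-- `β̄ = min{b : φ(α,b) ≤ t}`. -/
def betaBar (μ : Zd d → ℝ) (t : ℝ) (α : Fin d → ℝ) : ℝ := sInf {b : ℝ | phi μ (α, b) ≤ t}

/-- `ā^t`: the lowest point of `D^t` with the same first `d-1` coordinates as `a`. -/
def abar (μ : Zd d → ℝ) (t : ℝ) (a : Rd d) : Rd d := (a.1, betaBar μ t a.1)

/-- The Green function `G_t(z,z') = ∑_n t^{-n} p^(n)(z,z')`. -/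
def green (μ μ₀ : Zd d → ℝ) (t : ℝ) (z z' : Ed d) : ℝ :=
  ∑' n, (t ^ n)⁻¹ * kerN μ μ₀ n z z'

/-- The `t`-Martin kernel `K_t(z,z') = G_t(z,z')/G_t(z₀,z')` with reference point `z₀`. -/
def martin (μ μ₀ : Zd d → ℝ) (t : ℝ) (z₀ z z' : Ed d) : ℝ :=
  green μ μ₀ t z z' / green μ μ₀ t z₀ z'

/-- Euclidean norm on `ℝ^d = ℝ^{d-1} × ℝ`. -/
def euclNorm (a : Rd d) : ℝ := Real.sqrt ((∑ i, a.1 i ^ 2) + a.2 ^ 2)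

/-- The point of `ℝ^d` corresponding to `z ∈ E`. -/
def vecE (z : Ed d) : Rd d := (fun i => (z.1 i : ℝ), (z.2 : ℝ))

/-- Euclidean distance from a point `v` to a set `S ⊆ ℝ^d`. -/
def distTo (S : Set (Rd d)) (v : Rd d) : ℝ := sInf ((fun q => euclNorm (v - q)) '' S)

/-- The function `h_{a,t}` of the paper. -/
def hFun (μ μ₀ : Zd d → ℝ) (t : ℝ) (a : Rd d) (z : Ed d) : ℝ :=
  if a ∉ dZero μ t ∧ phi μ₀ (abar μ t a) < t then
    Real.exp (dotE a z)
      - ((t - phi μ₀ a) / (t - phi μ₀ (abar μ t a))) * Real.exp (dotE (abar μ t a) z)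
  else if a = abar μ t a ∧ a ∈ dZero μ t ∧ phi μ₀ a < t then
    ((z.2 : ℝ) + dBeta (phi μ₀) a / (t - phi μ₀ a)) * Real.exp (dotE a z)
  else Real.exp (dotE (abar μ t a) z)


/-! Exponentials are eigenfunctions of every row of `P`: `∑ p(z,z') e^{a·z'}` equals
`φ(a) e^{a·z}` off the boundary and `φ₀(a) e^{a·z}` on it. Off the boundary `h` is therefore
`t`-harmonic because `φ(a) = φ(ā) = t`; on the boundary `e^{a·z} = e^{ā·z}`, and
`c = (t - φ₀(a))/(t - φ₀(ā))` is exactly the coefficient with `φ₀(a) - c φ₀(ā) = t (1 - c)`. -/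

lemma dotZ_jump (a : Rd d) (z z' : Ed d) :
    dotZ a (jump z z') = dotE a z' - dotE a z := by
  simp only [dotZ, dotE, jump, Pi.sub_apply]
  push_cast
  simp only [mul_sub, Finset.sum_sub_distrib]
  ring

lemma dotE_eq_of_fst_eq_of_snd_eq_zero {a b : Rd d} (hab : a.1 = b.1) {z : Ed d}
    (hz : z.2 = 0) : dotE a z = dotE b z := by
  simp [dotE, hab, hz]

lemma jump_injective (z : Ed d) : Function.Injective (jump z) := by
  intro z₁ z₂ h
  simp only [jump, Prod.mk.injEq, sub_left_inj] at h
  exact Prod.ext h.1 (by omega)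

lemma mem_range_jump_of_le (z : Ed d) {w : Zd d} (hw : -(z.2 : ℤ) ≤ w.2) :
    w ∈ Set.range (jump z) :=
  ⟨(w.1 + z.1, (w.2 + z.2).toNat), Prod.ext (by simp [jump]) (by simp [jump]; omega)⟩

lemma hasSum_jump_mul_exp (ν : Zd d → ℝ) (a : Rd d) (z : Ed d)
    (hν : ∀ w : Zd d, w.2 < -(z.2 : ℤ) → ν w = 0)
    (hsum : Summable fun w : Zd d => ν w * Real.exp (dotZ a w)) :
    HasSum (fun z' : Ed d => ν (jump z z') * Real.exp (dotE a z'))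
      (Real.exp (dotE a z) * phi ν a) := by
  have hvanish : ∀ w ∉ Set.range (jump z), ν w * Real.exp (dotZ a w) = 0 := fun w hw => by
    rw [hν w (not_le.mp fun h => hw (mem_range_jump_of_le z h)), zero_mul]
  have hshift : HasSum (fun z' => ν (jump z z') * Real.exp (dotZ a (jump z z'))) (phi ν a) :=
    ((jump_injective z).hasSum_iff hvanish).mpr hsum.hasSum
  refine (hshift.mul_left (Real.exp (dotE a z))).congr_fun fun z' => ?_
  rw [dotZ_jump, Real.exp_sub]
  field_simp

lemma hasSum_ker_mul_exp {μ μ₀ : Zd d → ℝ} (h0 : H0 μ μ₀) (h3 : H3 μ) (h3' : H3 μ₀)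
    (a : Rd d) (z : Ed d) :
    HasSum (fun z' : Ed d => ker μ μ₀ z z' * Real.exp (dotE a z'))
      (Real.exp (dotE a z) * phi (if z.2 = 0 then μ₀ else μ) a) := by
  by_cases hz : z.2 = 0
  · simp only [ker, hz, if_true]
    exact hasSum_jump_mul_exp μ₀ a z (fun w hw => h0.2 w (by omega)) (h3' a)
  · simp only [ker, hz, if_false]
    exact hasSum_jump_mul_exp μ a z (fun w hw => h0.1 w (by omega)) (h3 a)

theorem h_first_case_harmonic_general {d : ℕ} (μ μ₀ : Zd d → ℝ)
    (h0 : H0 μ μ₀) (h3 : H3 μ) (h3' : H3 μ₀)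
    (t : ℝ) (a abarv : Rd d) (hsame : abarv.1 = a.1)
    (hphia : phi μ a = t) (hphiab : phi μ abarv = t) (hphi0 : phi μ₀ abarv < t) :
    ∀ z : Ed d,
      ∑' z' : Ed d, ker μ μ₀ z z' *
          (Real.exp (dotE a z')
            - ((t - phi μ₀ a) / (t - phi μ₀ abarv)) * Real.exp (dotE abarv z'))
        = t * (Real.exp (dotE a z)
            - ((t - phi μ₀ a) / (t - phi μ₀ abarv)) * Real.exp (dotE abarv z)) := by
  intro z
  set c := (t - phi μ₀ a) / (t - phi μ₀ abarv) with hc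
  have hP := (hasSum_ker_mul_exp h0 h3 h3' a z).sub
    ((hasSum_ker_mul_exp h0 h3 h3' abarv z).mul_left c)
  rw [(hP.congr_fun fun z' => by ring).tsum_eq]
  by_cases hz : z.2 = 0
  · have hne : t - phi μ₀ abarv ≠ 0 := by linarith
    simp only [hz, if_true, dotE_eq_of_fst_eq_of_snd_eq_zero hsame hz, hc]
    field_simp
    ring
  · simp only [hz, if_false, hphia, hphiab]
    ring

/-- under (H0) and (H3), if `a = (α,β)` and `ā = (α,β̄)` have the same
first `d-1` coordinates, `φ(a) = φ(ā) = t` and `φ₀(ā) < t`, then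
`h(z) = e^{a·z} − ((t − φ₀(a))/(t − φ₀(ā))) e^{ā·z}` is `t`-harmonic for `P`. -/
theorem h_first_case_harmonic {d : ℕ} (μ μ₀ : Zd d → ℝ)
    (hμ : IsMeasure μ) (hμ₀ : IsMeasure μ₀)
    (h0 : H0 μ μ₀) (h3 : H3 μ) (h3' : H3 μ₀)
    (t : ℝ) (ht : 0 < t) (a abarv : Rd d) (hsame : abarv.1 = a.1)
    (hphia : phi μ a = t) (hphiab : phi μ abarv = t) (hphi0 : phi μ₀ abarv < t) :
    ∀ z : Ed d,
      ∑' z' : Ed d, ker μ μ₀ z z' *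
          (Real.exp (dotE a z')
            - ((t - phi μ₀ a) / (t - phi μ₀ abarv)) * Real.exp (dotE abarv z'))
        = t * (Real.exp (dotE a z)
            - ((t - phi μ₀ a) / (t - phi μ₀ abarv)) * Real.exp (dotE abarv z)) :=
  h_first_case_harmonic_general μ μ₀ h0 h3 h3' t a abarv hsame hphia hphiab hphi0
end RWHalfspace
end
end

section
/- Let d = 2 and assume (H0), (H1), (H3). Suppose inf_{a∈ℝ²} max(φ(a), φ₀(a)) > inf_{a∈ℝ²} φ(a) and that the minimum of a ↦ max(φ(a), φ₀(a)) over ℝ² is attained at a point a* = (α*, β*). Then φ(a*) = φ₀(a*), (∂φ/∂β)(a*) ≤ 0, and (∂φ₀/∂β)(a*) > 0, where ∂/∂β denotes the partial derivative with respect to the second coordinate. -/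
/-!
Both `φ` and `φ₀` are convex and differentiable, being exponential sums with summable
exponential moments. By (H1) the walk must leave the boundary, so `μ₀` charges some upward jump,
and by (H0) it charges no downward one; hence `∂φ₀/∂β > 0` everywhere.

If `φ(a*) < φ₀(a*)`, then `max(φ, φ₀) = φ₀` near `a*`, so `a*` is a critical point of `φ₀`,
which is impossible. If `φ(a*) > φ₀(a*)`, then `a*` is a local, hence by convexity a global,
minimum of `φ`, contradicting `inf φ < inf max(φ, φ₀)`. Finally, if `∂φ/∂β(a*) > 0`, moving
`a*` down in the `β` direction decreases both `φ` and `φ₀`, hence their maximum.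
-/

open scoped Classical BigOperators
open Filter

noncomputable section

namespace RWHalfspace

variable {d : ℕ}

open Topology

section Calculus

variable {E : Type*} [NormedAddCommGroup E] [NormedSpace ℝ E]

lemma eventually_lt_sub_smul_of_fderiv_pos {f : E → ℝ} {a v : E} (hf : DifferentiableAt ℝ f a)
    (hv : 0 < fderiv ℝ f a v) : ∀ᶠ t in 𝓝[>] (0 : ℝ), f (a - t • v) < f a := by
  have hline : HasDerivAt (fun t : ℝ => f (a - t • v)) (fderiv ℝ f a (-v)) 0 := by
    have hdir : HasDerivAt (fun t : ℝ => a - t • v) (-v) 0 := by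
      simpa using ((hasDerivAt_id (0 : ℝ)).smul_const v).const_sub a
    have hfa : HasFDerivAt f (fderiv ℝ f a) (a - (0 : ℝ) • v) := by simpa using hf.hasFDerivAt
    exact hfa.comp_hasDerivAt 0 hdir
  have hslope : ∀ᶠ t in 𝓝[>] (0 : ℝ), slope (fun t : ℝ => f (a - t • v)) 0 t < 0 :=
    ((hasDerivAt_iff_tendsto_slope.mp hline).mono_left
      (nhdsWithin_mono _ fun t ht => ne_of_gt ht)).eventually
      (eventually_lt_nhds (by simpa using hv))
  filter_upwards [hslope, self_mem_nhdsWithin] with t hneg (htpos : 0 < t)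
  simp only [slope_def_field, zero_smul, sub_zero] at hneg
  linarith [(div_lt_iff₀ htpos).mp hneg]

end Calculus

lemma isLocalMin_of_forall_max_le_of_lt {X β : Type*} [TopologicalSpace X] [LinearOrder β]
    [TopologicalSpace β] [OrderClosedTopology β] {f g : X → β} {a : X}
    (hmin : ∀ x, max (f a) (g a) ≤ max (f x) (g x)) (hf : ContinuousAt f a) (hg : ContinuousAt g a)
    (hlt : f a < g a) : IsLocalMin g a := by
  filter_upwards [hf.eventually_lt hg hlt] with x hx
  simpa only [max_eq_right hlt.le, max_eq_right hx.le] using hmin x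

variable {d : ℕ}

def dotZCLM (z : Zd d) : Rd d →L[ℝ] ℝ :=
  (∑ i, (z.1 i : ℝ) • (ContinuousLinearMap.proj i).comp (ContinuousLinearMap.fst ℝ _ ℝ))
    + (z.2 : ℝ) • ContinuousLinearMap.snd ℝ _ ℝ

@[simp] lemma dotZCLM_apply (z : Zd d) (a : Rd d) : dotZCLM z a = dotZ a z := by
  simp [dotZCLM, dotZ, mul_comm]

lemma dotZ_add (a b : Rd d) (z : Zd d) : dotZ (a + b) z = dotZ a z + dotZ b z := by
  simp only [← dotZCLM_apply, map_add]

lemma dotZ_smul (c : ℝ) (a : Rd d) (z : Zd d) : dotZ (c • a) z = c * dotZ a z := by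
  simp only [← dotZCLM_apply, map_smul, smul_eq_mul]

lemma dotZ_sub (a b : Rd d) (z : Zd d) : dotZ (a - b) z = dotZ a z - dotZ b z := by
  simp only [← dotZCLM_apply, map_sub]

def normL1 (z : Zd d) : ℝ := (∑ i, |(z.1 i : ℝ)|) + |(z.2 : ℝ)|

lemma normL1_nonneg (z : Zd d) : 0 ≤ normL1 z := by
  unfold normL1; positivity

lemma abs_dotZ_le (a : Rd d) (z : Zd d) : |dotZ a z| ≤ ‖a‖ * normL1 z := by
  have hcoord : ∀ i, |a.1 i| ≤ ‖a‖ := fun i => (norm_le_pi_norm a.1 i).trans (norm_fst_le a)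
  calc |dotZ a z| ≤ (∑ i, |a.1 i| * |(z.1 i : ℝ)|) + |a.2| * |(z.2 : ℝ)| := by
        refine (abs_add_le _ _).trans (add_le_add ((Finset.abs_sum_le_sum_abs _ _).trans ?_) ?_)
        · simp only [abs_mul, le_refl]
        · rw [abs_mul]
    _ ≤ (∑ i, ‖a‖ * |(z.1 i : ℝ)|) + ‖a‖ * |(z.2 : ℝ)| := by
        gcongr with i
        · exact hcoord i
        · exact norm_snd_le a
    _ = ‖a‖ * normL1 z := by rw [normL1, mul_add, Finset.mul_sum]

lemma norm_dotZCLM_le (z : Zd d) : ‖dotZCLM z‖ ≤ normL1 z :=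
  ContinuousLinearMap.opNorm_le_bound _ (normL1_nonneg z) fun a => by
    simpa only [dotZCLM_apply, Real.norm_eq_abs, mul_comm] using abs_dotZ_le a z

def signVec (σ : (Fin d → SignType) × SignType) : Rd d := (fun i => (σ.1 i : ℝ), (σ.2 : ℝ))

lemma dotZ_signVec_sign (z : Zd d) :
    dotZ (signVec (fun i => SignType.sign (z.1 i : ℝ), SignType.sign (z.2 : ℝ))) z = normL1 z := by
  simp only [dotZ, signVec, normL1, sign_mul_self]

variable {μ : Zd d → ℝ}

-- `e^{c‖z‖₁} = e^{c σ·z}` for the sign pattern `σ` of `z`, and there are finitely many patterns.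
lemma summable_mul_exp_add_normL1 (hμ : ∀ z, 0 ≤ μ z) (h3 : H3 μ) (a : Rd d) (c : ℝ) :
    Summable fun z => μ z * Real.exp (dotZ a z + c * normL1 z) := by
  refine (summable_sum (s := Finset.univ) fun σ _ => h3 (a + c • signVec σ)).of_nonneg_of_le
    (fun z => mul_nonneg (hμ z) (Real.exp_pos _).le) fun z => ?_
  calc μ z * Real.exp (dotZ a z + c * normL1 z)
      = μ z * Real.exp (dotZ (a + c • signVec
          (fun i => SignType.sign (z.1 i : ℝ), SignType.sign (z.2 : ℝ))) z) := by
        rw [dotZ_add, dotZ_smul, dotZ_signVec_sign]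
    _ ≤ _ := Finset.single_le_sum (f := fun σ => μ z * Real.exp (dotZ (a + c • signVec σ) z))
        (fun σ _ => mul_nonneg (hμ z) (Real.exp_pos _).le) (Finset.mem_univ _)

lemma norm_smul_dotZCLM_le (hμ : ∀ z, 0 ≤ μ z) {a x : Rd d} (hx : dist x a < 1) (z : Zd d) :
    ‖(μ z * Real.exp (dotZ x z)) • dotZCLM z‖ ≤ μ z * Real.exp (dotZ a z + 2 * normL1 z) := by
  have hxa : dotZ x z ≤ dotZ a z + normL1 z := by
    have := (le_abs_self _).trans (abs_dotZ_le (x - a) z)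
    rw [dotZ_sub, ← dist_eq_norm] at this
    nlinarith [normL1_nonneg z]
  have hnorm : ‖dotZCLM z‖ ≤ Real.exp (normL1 z) :=
    (norm_dotZCLM_le z).trans ((le_add_of_nonneg_right zero_le_one).trans (Real.add_one_le_exp _))
  rw [norm_smul, Real.norm_of_nonneg (mul_nonneg (hμ z) (Real.exp_pos _).le)]
  calc μ z * Real.exp (dotZ x z) * ‖dotZCLM z‖
      ≤ μ z * Real.exp (dotZ a z + normL1 z) * Real.exp (normL1 z) := by
        have := hμ z
        gcongr
    _ = μ z * Real.exp (dotZ a z + 2 * normL1 z) := by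
        rw [mul_assoc, ← Real.exp_add]; ring_nf

lemma hasFDerivAt_phi (hμ : ∀ z, 0 ≤ μ z) (h3 : H3 μ) (a : Rd d) :
    HasFDerivAt (phi μ) (∑' z, (μ z * Real.exp (dotZ a z)) • dotZCLM z) a := by
  have hterm : ∀ z x, HasFDerivAt (fun y => μ z * Real.exp (dotZ y z))
      ((μ z * Real.exp (dotZ x z)) • dotZCLM z) x := fun z x => by
    simpa [smul_smul] using ((dotZCLM z).hasFDerivAt (x := x)).exp.const_mul (μ z)
  exact hasFDerivAt_tsum_of_isPreconnected (summable_mul_exp_add_normL1 hμ h3 a 2)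
    Metric.isOpen_ball (convex_ball a 1).isPreconnected (fun z x _ => hterm z x)
    (fun z x hx => norm_smul_dotZCLM_le hμ hx z) (Metric.mem_ball_self one_pos) (h3 a)
    (Metric.mem_ball_self one_pos)

lemma differentiable_phi (hμ : ∀ z, 0 ≤ μ z) (h3 : H3 μ) : Differentiable ℝ (phi μ) :=
  fun a => (hasFDerivAt_phi hμ h3 a).differentiableAt

lemma hasSum_dBeta_phi (hμ : ∀ z, 0 ≤ μ z) (h3 : H3 μ) (a : Rd d) :
    HasSum (fun z => μ z * Real.exp (dotZ a z) * (z.2 : ℝ)) (dBeta (phi μ) a) := by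
  have hsum : Summable fun z => (μ z * Real.exp (dotZ a z)) • dotZCLM z :=
    .of_norm_bounded (summable_mul_exp_add_normL1 hμ h3 a 2)
      (norm_smul_dotZCLM_le hμ (dist_self a ▸ one_pos))
  rw [dBeta, (hasFDerivAt_phi hμ h3 a).fderiv]
  simpa [dotZ] using hsum.hasSum.mapL (ContinuousLinearMap.apply ℝ ℝ ((0, 1) : Rd d))

lemma convexOn_phi (hμ : ∀ z, 0 ≤ μ z) (h3 : H3 μ) : ConvexOn ℝ Set.univ (phi μ) := by
  refine ⟨convex_univ, fun x _ y _ s t hs ht hst => ?_⟩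
  refine hasSum_le (fun z => ?_) (h3 _).hasSum
    (((h3 x).hasSum.mul_left s).add ((h3 y).hasSum.mul_left t))
  have hexp := convexOn_exp.2 (Set.mem_univ (dotZ x z)) (Set.mem_univ (dotZ y z)) hs ht hst
  simp only [smul_eq_mul] at hexp
  rw [dotZ_add, dotZ_smul, dotZ_smul]
  nlinarith [hμ z]

lemma kerN_eq_zero_of_forall_up_eq_zero {μ₀ : Zd d → ℝ} (hup : ∀ z : Zd d, 0 < z.2 → μ₀ z = 0)
    (n : ℕ) (x : Fin d → ℤ) (w : Ed d) (hw : w.2 ≠ 0) : kerN μ μ₀ n (x, 0) w = 0 := by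
  induction n generalizing w with
  | zero => simp only [kerN, ite_eq_right_iff, one_ne_zero]; rintro rfl; exact hw rfl
  | succ n ih =>
    refine (tsum_congr fun v => ?_).trans tsum_zero
    by_cases hv : v.2 = 0
    · have hjump : 0 < (jump v w).2 := by simp [jump, hv, Nat.pos_of_ne_zero hw]
      rw [ker, if_pos hv, hup _ hjump, mul_zero]
    · rw [ih v hv, zero_mul]

lemma exists_pos_up_of_H1 {μ₀ : Zd d → ℝ} (hμ₀ : ∀ z, 0 ≤ μ₀ z) (h1 : H1 μ μ₀) :
    ∃ z : Zd d, 0 < μ₀ z ∧ 0 < z.2 := by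
  by_contra! hno
  obtain ⟨n, hn⟩ := h1 (0, 0) (0, 1)
  have hup : ∀ z : Zd d, 0 < z.2 → μ₀ z = 0 := fun z hz =>
    ((hμ₀ z).lt_or_eq.resolve_left fun h => not_lt.2 (hno z h) hz).symm
  rw [kerN_eq_zero_of_forall_up_eq_zero hup n 0 (0, 1) one_ne_zero] at hn
  exact hn.false

lemma dBeta_phi_pos (hμ : ∀ z, 0 ≤ μ z) (h3 : H3 μ) (hdown : ∀ z : Zd d, z.2 < 0 → μ z = 0)
    (hup : ∃ z : Zd d, 0 < μ z ∧ 0 < z.2) (a : Rd d) : 0 < dBeta (phi μ) a := by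
  obtain ⟨z₀, hμz₀, hz₀⟩ := hup
  refine hasSum_lt (f := 0) (fun z => ?_) ?_ hasSum_zero (hasSum_dBeta_phi hμ h3 a) (i := z₀)
  · rcases lt_or_ge z.2 0 with hz | hz
    · simp [hdown z hz]
    · exact mul_nonneg (mul_nonneg (hμ z) (Real.exp_pos _).le) (Int.cast_nonneg_iff.mpr hz)
  · exact mul_pos (mul_pos hμz₀ (Real.exp_pos _)) (by exact_mod_cast hz₀)

/-- for `d = 2` (Lean parameter `1`), under (H0), (H1), (H3), if
`inf max(φ,φ₀) > inf φ` and the minimum of `max(φ,φ₀)` is attained at `a*`, then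
`φ(a*) = φ₀(a*)`, `(∂φ/∂β)(a*) ≤ 0` and `(∂φ₀/∂β)(a*) > 0`. -/
theorem minimizer_properties (μ μ₀ : Zd 1 → ℝ)
    (hμ : IsMeasure μ) (hμ₀ : IsMeasure μ₀)
    (h0 : H0 μ μ₀) (h1 : H1 μ μ₀) (h3 : H3 μ) (h3' : H3 μ₀)
    (hgap : sInf (Set.range fun a : Rd 1 => phi μ a) <
      sInf (Set.range fun a : Rd 1 => max (phi μ a) (phi μ₀ a)))
    (astar : Rd 1)
    (hmin : ∀ a : Rd 1, max (phi μ astar) (phi μ₀ astar) ≤ max (phi μ a) (phi μ₀ a)) :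
    phi μ astar = phi μ₀ astar ∧
      dBeta (phi μ) astar ≤ 0 ∧
      0 < dBeta (phi μ₀) astar := by
  obtain ⟨hμ, -, -⟩ := hμ
  obtain ⟨hμ₀, -, -⟩ := hμ₀
  have hdiff := differentiable_phi hμ h3
  have hdiff₀ := differentiable_phi hμ₀ h3'
  have hβ₀ : 0 < dBeta (phi μ₀) astar :=
    dBeta_phi_pos hμ₀ h3' h0.2 (exists_pos_up_of_H1 hμ₀ h1) astar
  have heq : phi μ astar = phi μ₀ astar := by
    rcases lt_trichotomy (phi μ astar) (phi μ₀ astar) with hlt | heq | hgt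
    · have hloc := isLocalMin_of_forall_max_le_of_lt hmin hdiff.continuous.continuousAt
        hdiff₀.continuous.continuousAt hlt
      simp [dBeta, hloc.fderiv_eq_zero] at hβ₀
    · exact heq
    · have hloc := isLocalMin_of_forall_max_le_of_lt (by simpa only [max_comm] using hmin)
        hdiff₀.continuous.continuousAt hdiff.continuous.continuousAt hgt
      have hglob := IsMinOn.of_isLocalMin_of_convex_univ hloc (convexOn_phi hμ h3)
      have hinf : phi μ astar ≤ sInf (Set.range fun a : Rd 1 => phi μ a) :=
        le_csInf (Set.range_nonempty _) (Set.forall_mem_range.2 hglob)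
      have hinf_max : sInf (Set.range fun a : Rd 1 => max (phi μ a) (phi μ₀ a)) ≤ phi μ astar :=
        max_eq_left hgt.le ▸ csInf_le ⟨_, Set.forall_mem_range.2 hmin⟩ ⟨astar, rfl⟩
      linarith
  refine ⟨heq, not_lt.1 fun hβ => ?_, hβ₀⟩
  obtain ⟨t, hlt, hlt₀⟩ := ((eventually_lt_sub_smul_of_fderiv_pos (hdiff astar) hβ).and
    (eventually_lt_sub_smul_of_fderiv_pos (hdiff₀ astar) hβ₀)).exists
  exact (hmin _).not_gt
    (max_lt (hlt.trans_le (le_max_left _ _)) (hlt₀.trans_le (le_max_right _ _)))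

end RWHalfspace
end
end
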